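/- arXiv:1909.03932 — 2 statements merged into one kernel-verified Lean document; each statement's English description precedes it below -/
import Mathlib

section
/- Let Ω̂ be a real symmetric positive semidefinite n×n matrix with rank(Ω̂) = r ≥ 1. Then for every real symmetric n×n matrix Λ with zero diagonal, one has −‖Ω̂ + Λ‖_r² + 2⟨Λ, Ω̂⟩ + ‖Ω̂‖_F² ≤ 0, with equality when Λ = 0. Consequently the supremum over Λ ∈ S_0^n of −‖Σ + Λ‖_r² + 2⟨Λ, Σ⟩ + ‖Σ‖_F² with Σ = Ω̂ equals 0 and is attained at Λ = 0. -/
/-!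
Let `P` be the orthogonal projection onto the range of `Ω̂`, so `tr P = r` and `Ω̂ P = Ω̂`, and put
`A = Ω̂ + Λ`. In an eigenbasis of `AᵀA` the diagonal of `P` has entries in `[0, 1]` summing to `r`,
so `tr (AᵀA P)` is at most the sum of the `r` largest eigenvalues of `AᵀA`, i.e. `‖A‖_r²`
(Ky Fan). On the other hand `tr (AᵀA P) = ‖AP‖_F² = ‖Ω̂ + ΛP‖_F²
= ‖Ω̂‖_F² + 2⟨Λ, Ω̂⟩ + ‖ΛP‖_F²`, because `⟨ΛP, Ω̂⟩ = ⟨Λ, Ω̂P⟩ = ⟨Λ, Ω̂⟩`.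
At `Λ = 0` equality holds since `‖Ω̂‖_r ≤ ‖Ω̂‖_F`.
-/

open Matrix

/-- The `k`-th largest singular value (1-indexed) of a real square matrix,
with junk value `0` when `k` is out of range. -/
noncomputable def sv {n : ℕ} (A : Matrix (Fin n) (Fin n) ℝ) (k : ℕ) : ℝ :=
  if h : k - 1 < n then
    (fun i => Real.sqrt ((Matrix.isHermitian_conjTranspose_mul_self A).eigenvalues i))
      (Tuple.sort (fun i : Fin n =>
        Real.sqrt ((Matrix.isHermitian_conjTranspose_mul_self A).eigenvalues i))
        (Fin.rev ⟨k - 1, h⟩))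
  else 0

noncomputable def opNorm {n : ℕ} (A : Matrix (Fin n) (Fin n) ℝ) : ℝ := sv A 1

noncomputable def frobNorm {n : ℕ} (A : Matrix (Fin n) (Fin n) ℝ) : ℝ :=
  Real.sqrt (∑ i, ∑ j, (A i j) ^ 2)

noncomputable def rNorm {n : ℕ} (A : Matrix (Fin n) (Fin n) ℝ) (r : ℕ) : ℝ :=
  Real.sqrt (∑ k ∈ Finset.range r, (sv A (k + 1)) ^ 2)

noncomputable def minner {n : ℕ} (A B : Matrix (Fin n) (Fin n) ℝ) : ℝ :=
  (Aᵀ * B).trace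

def rangesOrth {n : ℕ} (A B : Matrix (Fin n) (Fin n) ℝ) : Prop :=
  ∀ x y : Fin n → ℝ, (A.mulVec x) ⬝ᵥ (B.mulVec y) = 0

open Finset Unitary

theorem sum_mul_le_sum_of_forall_le {ι : Type*} [Fintype ι] [DecidableEq ι] (μ c : ι → ℝ)
    (T : Finset ι) (hc₀ : ∀ i, 0 ≤ c i) (hc₁ : ∀ i, c i ≤ 1) (hc : ∑ i, c i = #T)
    (hT : ∀ i ∈ T, ∀ j ∉ T, μ j ≤ μ i) :
    ∑ i, μ i * c i ≤ ∑ i ∈ T, μ i := by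
  obtain ⟨m, hm_le, hle_m⟩ : ∃ m, (∀ i ∈ T, m ≤ μ i) ∧ ∀ j ∉ T, μ j ≤ m := by
    rcases T.eq_empty_or_nonempty with rfl | hne
    · exact ⟨∑ j, |μ j|, by simp, fun j _ =>
        (le_abs_self _).trans
          (single_le_sum (f := fun j => |μ j|) (fun _ _ => abs_nonneg _) (mem_univ j))⟩
    · obtain ⟨i₀, hi₀, hmin⟩ := T.exists_min_image μ hne
      exact ⟨μ i₀, hmin, fun j hj => hT i₀ hi₀ j hj⟩
  -- `m` separates the two blocks, so moving weight from `Tᶜ` into `T` never decreases the sum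
  have hin : ∑ i ∈ T, μ i * c i ≤ ∑ i ∈ T, (μ i - m * (1 - c i)) :=
    sum_le_sum fun i hi => by nlinarith [hm_le i hi, hc₁ i]
  have hout : ∑ i ∈ Tᶜ, μ i * c i ≤ ∑ i ∈ Tᶜ, m * c i :=
    sum_le_sum fun i hi => by nlinarith [hle_m i (mem_compl.mp hi), hc₀ i]
  have hmass : ∑ i ∈ T, (1 - c i) = ∑ i ∈ Tᶜ, c i := by
    rw [sum_sub_distrib, sum_const, nsmul_one, ← hc, ← sum_add_sum_compl T c]
    ring
  rw [sum_sub_distrib, ← mul_sum, hmass] at hin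
  rw [← mul_sum] at hout
  rw [← sum_add_sum_compl T]
  linarith

section RealMatrix

variable {n : Type*} [Fintype n] [DecidableEq n]

theorem Matrix.trace_conjStarAlgAut (u : unitary (Matrix n n ℝ)) (X : Matrix n n ℝ) :
    (conjStarAlgAut ℝ _ u X).trace = X.trace := by
  rw [conjStarAlgAut_apply, trace_mul_cycle, coe_star_mul_self, one_mul]

theorem Matrix.PosSemidef.conjStarAlgAut {X : Matrix n n ℝ} (hX : X.PosSemidef)
    (u : unitary (Matrix n n ℝ)) : (Unitary.conjStarAlgAut ℝ _ u X).PosSemidef := by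
  rw [conjStarAlgAut_apply, star_eq_conjTranspose]
  exact hX.mul_mul_conjTranspose_same _

theorem Matrix.IsHermitian.conjStarAlgAut_star_eigenvectorUnitary_eq_diagonal {M : Matrix n n ℝ}
    (hM : M.IsHermitian) :
    Unitary.conjStarAlgAut ℝ _ (star hM.eigenvectorUnitary) M = diagonal hM.eigenvalues := by
  rw [hM.conjStarAlgAut_star_eigenvectorUnitary, RCLike.ofReal_real_eq_id, Function.id_comp]

theorem Matrix.IsHermitian.trace_mul_le_sum_eigenvalues {M P : Matrix n n ℝ} (hM : M.IsHermitian)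
    (hP₀ : P.PosSemidef) (hP₁ : (1 - P).PosSemidef) {T : Finset n} (hPT : P.trace = #T)
    (hT : ∀ i ∈ T, ∀ j ∉ T, hM.eigenvalues j ≤ hM.eigenvalues i) :
    (M * P).trace ≤ ∑ i ∈ T, hM.eigenvalues i := by
  set u := star hM.eigenvectorUnitary
  set Q := conjStarAlgAut ℝ _ u P
  have hQ₀ : Q.PosSemidef := hP₀.conjStarAlgAut u
  have hQ₁ : (1 - Q).PosSemidef := by
    simpa only [map_sub, map_one] using hP₁.conjStarAlgAut u
  have htrace : (M * P).trace = ∑ i, hM.eigenvalues i * Q i i := by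
    rw [← trace_conjStarAlgAut u, map_mul, hM.conjStarAlgAut_star_eigenvectorUnitary_eq_diagonal]
    simp only [trace, diag_apply, diagonal_mul]
    rfl
  rw [htrace]
  refine sum_mul_le_sum_of_forall_le _ _ T (fun i => hQ₀.diag_nonneg) (fun i => ?_) ?_ hT
  · simpa using hQ₁.diag_nonneg (i := i)
  · rw [← hPT, ← trace_conjStarAlgAut u P]
    rfl

theorem Matrix.IsHermitian.exists_projection_trace_eq_rank {A : Matrix n n ℝ}
    (hA : A.IsHermitian) :
    ∃ P : Matrix n n ℝ, P.PosSemidef ∧ (1 - P).PosSemidef ∧ P.trace = A.rank ∧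
      A * P = A ∧ P * P = P := by
  set φ := conjStarAlgAut ℝ (Matrix n n ℝ) hA.eigenvectorUnitary
  set χ : n → ℝ := fun i => if hA.eigenvalues i = 0 then 0 else 1
  have hA_eq : φ (diagonal hA.eigenvalues) = A := by
    have := hA.spectral_theorem
    rw [RCLike.ofReal_real_eq_id, Function.id_comp] at this
    exact this.symm
  refine ⟨φ (diagonal χ), ?_, ?_, ?_, ?_, ?_⟩
  · refine (PosSemidef.diagonal fun i => ?_).conjStarAlgAut _
    simp only [χ, Pi.zero_apply]
    split_ifs <;> norm_num
  · rw [← map_one φ, ← map_sub, ← diagonal_one, diagonal_sub]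
    refine (PosSemidef.diagonal fun i => ?_).conjStarAlgAut _
    simp only [χ, Pi.zero_apply]
    split_ifs <;> norm_num
  · rw [trace_conjStarAlgAut, trace_diagonal, hA.rank_eq_card_non_zero_eigs, Fintype.card_subtype]
    simp [χ, sum_ite]
  · have : diagonal hA.eigenvalues * diagonal χ = diagonal hA.eigenvalues := by
      rw [diagonal_mul_diagonal]
      congr 1
      ext i
      simp only [χ]
      split_ifs with h <;> simp [h]
    rw [← hA_eq, ← map_mul, this]
  · rw [← map_mul, diagonal_mul_diagonal]
    congr 2
    ext i
    simp only [χ]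
    split_ifs <;> norm_num

end RealMatrix

section SquareMatrix

variable {n : ℕ}

theorem exists_rNorm_sq_eq_sum_eigenvalues (A : Matrix (Fin n) (Fin n) ℝ) {r : ℕ} (hrn : r ≤ n) :
    ∃ T : Finset (Fin n), #T = r ∧
      (∀ i ∈ T, ∀ j ∉ T, (isHermitian_conjTranspose_mul_self A).eigenvalues j ≤
        (isHermitian_conjTranspose_mul_self A).eigenvalues i) ∧
      rNorm A r ^ 2 = ∑ i ∈ T, (isHermitian_conjTranspose_mul_self A).eigenvalues i := by
  set μ := (isHermitian_conjTranspose_mul_self A).eigenvalues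
  set σ := Tuple.sort fun i => √(μ i)
  -- `e k` is the index of the `(k + 1)`-st largest singular value
  let e : Fin r ↪ Fin n := (Fin.castLEEmb hrn).trans (Fin.revPerm.trans σ).toEmbedding
  have he : ∀ k, e k = σ (Fin.rev (Fin.castLE hrn k)) := fun _ => rfl
  have hsv : ∀ k : Fin r, sv A (k + 1) ^ 2 = μ (e k) := by
    intro k
    have hk : (k : ℕ) + 1 - 1 < n := by omega
    rw [sv, dif_pos hk, he]
    show √(μ (σ (Fin.rev ⟨k + 1 - 1, hk⟩))) ^ 2 = _
    rw [Real.sq_sqrt (eigenvalues_conjTranspose_mul_self_nonneg A _)]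
    congr 3
  refine ⟨univ.map e, by simp, ?_, ?_⟩
  · simp only [mem_map, mem_univ, true_and, not_exists]
    rintro _ ⟨k, rfl⟩ j hj
    have hm : r ≤ (Fin.rev (σ.symm j) : ℕ) := by
      by_contra! hm
      refine hj ⟨Fin.rev (σ.symm j), hm⟩ ?_
      have hcast : Fin.castLE hrn ⟨_, hm⟩ = Fin.rev (σ.symm j) := rfl
      rw [he, hcast, Fin.rev_rev, Equiv.apply_symm_apply]
    have hle : σ.symm j ≤ Fin.rev (Fin.castLE hrn k) := by
      rw [Fin.le_def]
      simp only [Fin.val_rev, Fin.val_castLE] at hm ⊢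
      omega
    have hsqrt : √(μ (σ (σ.symm j))) ≤ √(μ (σ (Fin.rev (Fin.castLE hrn k)))) :=
      Tuple.monotone_sort (fun i => √(μ i)) hle
    rwa [Equiv.apply_symm_apply,
      Real.sqrt_le_sqrt_iff (eigenvalues_conjTranspose_mul_self_nonneg A _), ← he] at hsqrt
  · rw [rNorm, Real.sq_sqrt (sum_nonneg fun _ _ => sq_nonneg _), ← Fin.sum_univ_eq_sum_range,
      sum_map]
    exact sum_congr rfl fun k _ => hsv k

theorem minner_self (X : Matrix (Fin n) (Fin n) ℝ) : minner X X = frobNorm X ^ 2 := by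
  rw [frobNorm, Real.sq_sqrt (by positivity), minner, trace, sum_comm]
  simp only [diag_apply, mul_apply, transpose_apply, sq]

theorem minner_comm (X Y : Matrix (Fin n) (Fin n) ℝ) : minner X Y = minner Y X := by
  rw [minner, minner, ← trace_transpose, transpose_mul, transpose_transpose]

theorem minner_mul_left (X Y Z : Matrix (Fin n) (Fin n) ℝ) :
    minner (X * Y) Z = minner X (Z * Yᵀ) := by
  rw [minner, minner, transpose_mul, Matrix.mul_assoc, trace_mul_comm, Matrix.mul_assoc]

theorem frobNorm_add_sq (X Y : Matrix (Fin n) (Fin n) ℝ) :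
    frobNorm (X + Y) ^ 2 = frobNorm X ^ 2 + 2 * minner X Y + frobNorm Y ^ 2 := by
  simp only [← minner_self, minner, transpose_add, add_mul, mul_add, trace_add]
  rw [← trace_transpose (Yᵀ * X), transpose_mul, transpose_transpose]
  ring

theorem rNorm_sq_le_frobNorm_sq (A : Matrix (Fin n) (Fin n) ℝ) {r : ℕ} (hrn : r ≤ n) :
    rNorm A r ^ 2 ≤ frobNorm A ^ 2 := by
  obtain ⟨T, -, -, hA⟩ := exists_rNorm_sq_eq_sum_eigenvalues A hrn
  have htrace := (isHermitian_conjTranspose_mul_self A).trace_eq_sum_eigenvalues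
  simp only [RCLike.ofReal_real_eq_id, id, conjTranspose_eq_transpose_of_trivial] at htrace
  rw [hA, ← minner_self, minner, htrace]
  exact sum_le_sum_of_subset_of_nonneg (subset_univ T)
    fun i _ _ => eigenvalues_conjTranspose_mul_self_nonneg A i

theorem frobNorm_sq_add_two_minner_le_rNorm_sq {Ω : Matrix (Fin n) (Fin n) ℝ} (hΩ : Ω.IsHermitian)
    (Λ : Matrix (Fin n) (Fin n) ℝ) :
    frobNorm Ω ^ 2 + 2 * minner Λ Ω ≤ rNorm (Ω + Λ) Ω.rank ^ 2 := by
  obtain ⟨P, hP₀, hP₁, hPtr, hΩP, hPP⟩ := hΩ.exists_projection_trace_eq_rank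
  have hPt : Pᵀ = P := by
    rw [← conjTranspose_eq_transpose_of_trivial]
    exact hP₀.isHermitian
  set A := Ω + Λ
  obtain ⟨T, hTcard, hT, hA⟩ :=
    exists_rNorm_sq_eq_sum_eigenvalues A (Ω.rank_le_card_width.trans_eq (Fintype.card_fin n))
  have hKyFan := (isHermitian_conjTranspose_mul_self A).trace_mul_le_sum_eigenvalues hP₀ hP₁
    (by rw [hPtr, hTcard]) hT
  have hAP : A * P = Ω + Λ * P := by rw [add_mul, hΩP]
  have hcross : minner Ω (Λ * P) = minner Λ Ω := by rw [minner_comm, minner_mul_left, hPt, hΩP]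
  calc frobNorm Ω ^ 2 + 2 * minner Λ Ω
      ≤ frobNorm Ω ^ 2 + 2 * minner Ω (Λ * P) + frobNorm (Λ * P) ^ 2 := by
        rw [hcross]
        nlinarith [sq_nonneg (frobNorm (Λ * P))]
    _ = frobNorm (A * P) ^ 2 := by rw [hAP, frobNorm_add_sq]
    _ = (Aᴴ * A * P).trace := by
        rw [← minner_self, minner_mul_left, hPt, Matrix.mul_assoc, hPP, minner,
          conjTranspose_eq_transpose_of_trivial, Matrix.mul_assoc]
    _ ≤ rNorm A Ω.rank ^ 2 := hA ▸ hKyFan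

end SquareMatrix

theorem stmt1_general {n r : ℕ} (Ωh : Matrix (Fin n) (Fin n) ℝ) (hΩ : Ωh.PosSemidef)
    (hrank : Ωh.rank = r) :
    (∀ Λ : Matrix (Fin n) (Fin n) ℝ, Λ.IsSymm → (∀ i, Λ i i = 0) →
      -(rNorm (Ωh + Λ) r) ^ 2 + 2 * minner Λ Ωh + (frobNorm Ωh) ^ 2 ≤ 0) ∧
    (-(rNorm (Ωh + 0) r) ^ 2 + 2 * minner 0 Ωh + (frobNorm Ωh) ^ 2 = 0) ∧
    IsGreatest {v : ℝ | ∃ Λ : Matrix (Fin n) (Fin n) ℝ, Λ.IsSymm ∧ (∀ i, Λ i i = 0) ∧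
      v = -(rNorm (Ωh + Λ) r) ^ 2 + 2 * minner Λ Ωh + (frobNorm Ωh) ^ 2} 0 := by
  subst hrank
  have hle (Λ : Matrix (Fin n) (Fin n) ℝ) :
      -(rNorm (Ωh + Λ) Ωh.rank) ^ 2 + 2 * minner Λ Ωh + (frobNorm Ωh) ^ 2 ≤ 0 := by
    linarith [frobNorm_sq_add_two_minner_le_rNorm_sq hΩ.isHermitian Λ]
  have heq : -(rNorm (Ωh + 0) Ωh.rank) ^ 2 + 2 * minner 0 Ωh + (frobNorm Ωh) ^ 2 = 0 := by
    have hrn := Ωh.rank_le_card_width.trans_eq (Fintype.card_fin n)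
    have hm0 : minner 0 Ωh = 0 := by simp [minner]
    have hge := hle 0
    rw [add_zero, hm0] at hge ⊢
    linarith [rNorm_sq_le_frobNorm_sq Ωh hrn]
  refine ⟨fun Λ _ _ => hle Λ, heq, ⟨0, isSymm_zero, fun _ => rfl, heq.symm⟩, ?_⟩
  rintro v ⟨Λ, -, -, rfl⟩
  exact hle Λ

/-- For PSD `Ωh` of rank `r ≥ 1`, the dual objective
`-‖Ωh + Λ‖_r² + 2⟨Λ, Ωh⟩ + ‖Ωh‖_F²` is `≤ 0` for every symmetric `Λ` with zero
diagonal, with equality at `Λ = 0`; hence its supremum over `S_0^n` is `0`,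
attained at `Λ = 0`. -/
theorem stmt1 {n r : ℕ} (Ωh : Matrix (Fin n) (Fin n) ℝ) (hΩ : Ωh.PosSemidef)
    (hrank : Ωh.rank = r) (hr : 1 ≤ r) :
    (∀ Λ : Matrix (Fin n) (Fin n) ℝ, Λ.IsSymm → (∀ i, Λ i i = 0) →
      -(rNorm (Ωh + Λ) r) ^ 2 + 2 * minner Λ Ωh + (frobNorm Ωh) ^ 2 ≤ 0) ∧
    (-(rNorm (Ωh + 0) r) ^ 2 + 2 * minner 0 Ωh + (frobNorm Ωh) ^ 2 = 0) ∧
    IsGreatest {v : ℝ | ∃ Λ : Matrix (Fin n) (Fin n) ℝ, Λ.IsSymm ∧ (∀ i, Λ i i = 0) ∧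
      v = -(rNorm (Ωh + Λ) r) ^ 2 + 2 * minner Λ Ωh + (frobNorm Ωh) ^ 2} 0 :=
  stmt1_general Ωh hΩ hrank
end

section
/- Let Ω̂ be a real symmetric positive semidefinite n×n matrix with rank(Ω̂) = r < n, let V be an n×(n−r) real matrix with orthonormal columns whose range equals the kernel of Ω̂, and let E be the linear operator from the space of real symmetric (n−r)×(n−r) matrices to the space of diagonal n×n matrices defined by E(X) := diag(V X Vᵀ) (the diagonal part of V X Vᵀ). Assume E is surjective, let E† := E∘(E E∘)⁻¹ be its Moore–Penrose pseudoinverse (where E∘ denotes the adjoint of E), and set φ(Ω̂) := inf over nonzero Δ ∈ D_+^n of ‖Δ‖_F / ‖E†(Δ)‖, where ‖E†(Δ)‖ is the operator norm of the symmetric matrix E†(Δ). Then every Δ ∈ D_+^n with ‖Δ‖_F < φ(Ω̂)·σ_r(Ω̂) belongs to D_Ω̂: there exists Λ ∈ S_0^n with ‖Δ + Λ‖ < σ_r(Ω̂) and range(Δ + Λ) orthogonal to range(Ω̂). -/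
open Matrix

/-! Take `Λ := V E†(Δ) Vᵀ - Δ`, so that `Δ + Λ = V E†(Δ) Vᵀ`. Its diagonal is `E(E†(Δ)) = Δ`,
so `Λ` vanishes on the diagonal; its range lies in `range V = ker Ω̂`, which is orthogonal to
`range Ω̂`; and conjugating by the isometry `V` does not increase the spectral norm, whence
`‖Δ + Λ‖ ≤ ‖E†(Δ)‖ ≤ ‖Δ‖_F / φ(Ω̂) < σ_r(Ω̂)` by the definition of `φ(Ω̂)` as an infimum. -/

section Spectral

variable {ι : Type*} [Fintype ι] [DecidableEq ι]

lemma dotProduct_mulVec_le_of_eigenvalues_le {B : Matrix ι ι ℝ} (hB : B.IsHermitian) {c : ℝ}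
    (hc : ∀ i, hB.eigenvalues i ≤ c) (x : ι → ℝ) : x ⬝ᵥ (B *ᵥ x) ≤ c * (x ⬝ᵥ x) := by
  set U : Matrix ι ι ℝ := (hB.eigenvectorUnitary : Matrix ι ι ℝ)
  have hUUt : U * Uᵀ = 1 := by
    simpa [U, star_eq_conjTranspose] using Unitary.coe_mul_star_self hB.eigenvectorUnitary
  have hB_eq : B = U * diagonal hB.eigenvalues * Uᵀ := by
    simpa [U, Unitary.conjStarAlgAut_apply, star_eq_conjTranspose] using hB.spectral_theorem
  set y := Uᵀ *ᵥ x
  have hyy : y ⬝ᵥ y = x ⬝ᵥ x := by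
    rw [dotProduct_mulVec, vecMul_transpose, mulVec_mulVec, hUUt, one_mulVec, dotProduct_comm]
  have hquad : x ⬝ᵥ (B *ᵥ x) = ∑ i, hB.eigenvalues i * y i ^ 2 := by
    conv_lhs => rw [hB_eq, ← mulVec_mulVec, ← mulVec_mulVec, dotProduct_mulVec, ← mulVec_transpose]
    simp only [dotProduct, mulVec_diagonal, y]
    exact Finset.sum_congr rfl fun i _ => by ring
  rw [hquad, ← hyy, dotProduct, Finset.mul_sum]
  exact Finset.sum_le_sum fun i _ => by nlinarith [hc i, sq_nonneg (y i)]

end Spectral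

section OpNorm

variable {m : ℕ}

lemma sv_nonneg (A : Matrix (Fin m) (Fin m) ℝ) (k : ℕ) : 0 ≤ sv A k := by
  unfold sv
  split
  · exact Real.sqrt_nonneg _
  · exact le_rfl

lemma opNorm_nonneg (A : Matrix (Fin m) (Fin m) ℝ) : 0 ≤ opNorm A := sv_nonneg A 1

lemma exists_opNorm_eq_sqrt_eigenvalues (hm : 0 < m) (A : Matrix (Fin m) (Fin m) ℝ) :
    ∃ i, opNorm A = √((isHermitian_conjTranspose_mul_self A).eigenvalues i) :=
  ⟨_, dif_pos hm⟩

lemma sqrt_eigenvalues_le_opNorm (A : Matrix (Fin m) (Fin m) ℝ) (i : Fin m) :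
    √((isHermitian_conjTranspose_mul_self A).eigenvalues i) ≤ opNorm A := by
  set s : Fin m → ℝ := fun i => √((isHermitian_conjTranspose_mul_self A).eigenvalues i)
  have hm : 0 < m := i.pos
  have hi_le_last : (Tuple.sort s).symm i ≤ Fin.rev ⟨0, hm⟩ := by
    have := ((Tuple.sort s).symm i).isLt
    simp only [Fin.le_def, Fin.val_rev]
    omega
  rw [show opNorm A = s (Tuple.sort s (Fin.rev ⟨0, hm⟩)) from dif_pos hm]
  have := Tuple.monotone_sort s hi_le_last
  simp only [Function.comp_apply, Equiv.apply_symm_apply] at this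
  exact this

lemma mulVec_dotProduct_mulVec_self {k : ℕ} (A : Matrix (Fin m) (Fin k) ℝ) (x : Fin k → ℝ) :
    (A *ᵥ x) ⬝ᵥ (A *ᵥ x) = x ⬝ᵥ ((Aᵀ * A) *ᵥ x) := by
  rw [← mulVec_mulVec, dotProduct_mulVec, ← mulVec_transpose, dotProduct_comm]

lemma mulVec_dotProduct_mulVec_self_le (A : Matrix (Fin m) (Fin m) ℝ) (x : Fin m → ℝ) :
    (A *ᵥ x) ⬝ᵥ (A *ᵥ x) ≤ opNorm A ^ 2 * (x ⬝ᵥ x) := by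
  have hA := isHermitian_conjTranspose_mul_self A
  have heig (i : Fin m) : hA.eigenvalues i ≤ opNorm A ^ 2 := by
    rw [← Real.sq_sqrt (eigenvalues_conjTranspose_mul_self_nonneg A i)]
    exact pow_le_pow_left₀ (Real.sqrt_nonneg _) (sqrt_eigenvalues_le_opNorm A i) 2
  simpa [mulVec_dotProduct_mulVec_self] using dotProduct_mulVec_le_of_eigenvalues_le hA heig x

lemma opNorm_le_of_mulVec_dotProduct_mulVec_self_le (A : Matrix (Fin m) (Fin m) ℝ) {c : ℝ}
    (hc : 0 ≤ c) (h : ∀ x, (A *ᵥ x) ⬝ᵥ (A *ᵥ x) ≤ c ^ 2 * (x ⬝ᵥ x)) : opNorm A ≤ c := by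
  rcases Nat.eq_zero_or_pos m with rfl | hm
  · simpa [opNorm, sv] using hc
  have hA := isHermitian_conjTranspose_mul_self A
  obtain ⟨i, hi⟩ := exists_opNorm_eq_sqrt_eigenvalues hm A
  set v : Fin m → ℝ := ⇑(hA.eigenvectorBasis i)
  have hv : v ⬝ᵥ v = 1 := by
    have := hA.eigenvectorBasis.orthonormal.1 i
    rw [← one_pow 2, ← this, ← real_inner_self_eq_norm_sq, EuclideanSpace.inner_eq_star_dotProduct]
    rfl
  have hAv : (A *ᵥ v) ⬝ᵥ (A *ᵥ v) = hA.eigenvalues i := by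
    have hev : (Aᵀ * A) *ᵥ v = hA.eigenvalues i • v := by
      simpa [v] using hA.mulVec_eigenvectorBasis i
    rw [mulVec_dotProduct_mulVec_self, hev, dotProduct_smul, hv, smul_eq_mul, mul_one]
  rw [hi]
  refine (Real.sqrt_le_sqrt ?_).trans_eq (Real.sqrt_sq hc)
  simpa [hAv, hv] using h v

end OpNorm

section Isometry

variable {n m : ℕ} {V : Matrix (Fin n) (Fin m) ℝ}

lemma mulVec_dotProduct_mulVec_self_of_isometry (hV : Vᵀ * V = 1) (z : Fin m → ℝ) :
    (V *ᵥ z) ⬝ᵥ (V *ᵥ z) = z ⬝ᵥ z := by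
  rw [mulVec_dotProduct_mulVec_self, hV, one_mulVec]

-- Bessel's inequality for the orthonormal columns of `V`: expand `0 ≤ ‖x - V Vᵀ x‖²`.
lemma transpose_mulVec_dotProduct_self_le (hV : Vᵀ * V = 1) (x : Fin n → ℝ) :
    (Vᵀ *ᵥ x) ⬝ᵥ (Vᵀ *ᵥ x) ≤ x ⬝ᵥ x := by
  set y := Vᵀ *ᵥ x
  have hxy : x ⬝ᵥ (V *ᵥ y) = y ⬝ᵥ y := by rw [dotProduct_mulVec, ← mulVec_transpose]
  have hsq : 0 ≤ (x - V *ᵥ y) ⬝ᵥ (x - V *ᵥ y) := Finset.sum_nonneg fun j _ => mul_self_nonneg _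
  rw [sub_dotProduct, dotProduct_sub, dotProduct_sub, hxy, dotProduct_comm (V *ᵥ y), hxy,
    mulVec_dotProduct_mulVec_self_of_isometry hV] at hsq
  linarith

lemma opNorm_conj_le_of_isometry (hV : Vᵀ * V = 1) (X : Matrix (Fin m) (Fin m) ℝ) :
    opNorm (V * X * Vᵀ) ≤ opNorm X := by
  refine opNorm_le_of_mulVec_dotProduct_mulVec_self_le _ (opNorm_nonneg X) fun x => ?_
  rw [← mulVec_mulVec, ← mulVec_mulVec, mulVec_dotProduct_mulVec_self_of_isometry hV]
  exact (mulVec_dotProduct_mulVec_self_le X _).trans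
    (mul_le_mul_of_nonneg_left (transpose_mulVec_dotProduct_self_le hV x) (sq_nonneg _))

end Isometry

lemma opNorm_zero {m : ℕ} : opNorm (0 : Matrix (Fin m) (Fin m) ℝ) = 0 :=
  le_antisymm (opNorm_le_of_mulVec_dotProduct_mulVec_self_le 0 le_rfl fun x => by simp)
    (opNorm_nonneg 0)

lemma sInf_mul_le_of_div_mem {s : Set ℝ} (hs : ∀ t ∈ s, 0 ≤ t) {a b : ℝ} (ha : 0 ≤ a)
    (hb : 0 ≤ b) (hab : a / b ∈ s) : sInf s * b ≤ a := by
  rcases hb.eq_or_lt with rfl | hb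
  · simpa using ha
  · exact (le_div_iff₀ hb).1 (csInf_le ⟨0, hs⟩ hab)

lemma rangesOrth_of_range_le_ker {n : ℕ} {A B : Matrix (Fin n) (Fin n) ℝ} (hB : B.IsSymm)
    (h : LinearMap.range A.mulVecLin ≤ LinearMap.ker B.mulVecLin) : rangesOrth A B := by
  intro x y
  have hx : B *ᵥ (A *ᵥ x) = 0 := h ⟨x, rfl⟩
  rw [dotProduct_mulVec, ← mulVec_transpose, hB.eq, hx, zero_dotProduct]

theorem stmt7_general {n r : ℕ}
    (Ωh : Matrix (Fin n) (Fin n) ℝ) (hΩ : Ωh.PosSemidef)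
    (V : Matrix (Fin n) (Fin (n - r)) ℝ)
    (hViso : Vᵀ * V = 1)
    (hVrange : LinearMap.range V.mulVecLin = LinearMap.ker Ωh.mulVecLin)
    -- `G` is the Moore–Penrose pseudoinverse `E†` of `E`:
    (G : Matrix (Fin n) (Fin n) ℝ →ₗ[ℝ] Matrix (Fin (n - r)) (Fin (n - r)) ℝ)
    (hGsymm : ∀ D : Matrix (Fin n) (Fin n) ℝ, D.IsDiag → (G D).IsSymm)
    (hGrinv : ∀ D : Matrix (Fin n) (Fin n) ℝ, D.IsDiag →
      Matrix.diagonal (V * G D * Vᵀ).diag = D)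
    (φ : ℝ)
    (hφ : φ = sInf {t : ℝ | ∃ Δ : Matrix (Fin n) (Fin n) ℝ, Δ.IsDiag ∧
      (∀ i, 0 ≤ Δ i i) ∧ Δ ≠ 0 ∧ t = frobNorm Δ / opNorm (G Δ)}) :
    ∀ Δ : Matrix (Fin n) (Fin n) ℝ, Δ.IsDiag → (∀ i, 0 ≤ Δ i i) →
      frobNorm Δ < φ * sv Ωh r →
      ∃ Λ : Matrix (Fin n) (Fin n) ℝ, Λ.IsSymm ∧ (∀ i, Λ i i = 0) ∧
        opNorm (Δ + Λ) < sv Ωh r ∧ rangesOrth (Δ + Λ) Ωh := by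
  intro Δ hΔdiag hΔnonneg hΔlt
  have hquot_nonneg : ∀ t ∈ {t : ℝ | ∃ Δ : Matrix (Fin n) (Fin n) ℝ, Δ.IsDiag ∧
      (∀ i, 0 ≤ Δ i i) ∧ Δ ≠ 0 ∧ t = frobNorm Δ / opNorm (G Δ)}, 0 ≤ t := by
    rintro _ ⟨Δ', -, -, -, rfl⟩
    exact div_nonneg (Real.sqrt_nonneg _) (opNorm_nonneg _)
  have hφ_nonneg : 0 ≤ φ := hφ ▸ Real.sInf_nonneg hquot_nonneg
  have hφG : φ * opNorm (G Δ) ≤ frobNorm Δ := by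
    by_cases hΔ : Δ = 0
    · simp [hΔ, opNorm_zero, frobNorm]
    · exact hφ ▸ sInf_mul_le_of_div_mem hquot_nonneg (Real.sqrt_nonneg _) (opNorm_nonneg _)
        ⟨Δ, hΔdiag, hΔnonneg, hΔ, rfl⟩
  set M := V * G Δ * Vᵀ
  have hM_lt : opNorm M < sv Ωh r :=
    (opNorm_conj_le_of_isometry hViso _).trans_lt
      (lt_of_mul_lt_mul_left (hφG.trans_lt hΔlt) hφ_nonneg)
  have hM_diag (i : Fin n) : M i i = Δ i i := by
    simpa using congrFun₂ (hGrinv Δ hΔdiag) i i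
  have hM_symm : M.IsSymm := by
    simp [M, IsSymm, transpose_mul, (hGsymm Δ hΔdiag).eq, Matrix.mul_assoc]
  have hM_range : LinearMap.range M.mulVecLin ≤ LinearMap.ker Ωh.mulVecLin := by
    rw [← hVrange, show M = V * (G Δ * Vᵀ) from Matrix.mul_assoc _ _ _, mulVecLin_mul]
    exact LinearMap.range_comp_le_range _ _
  refine ⟨M - Δ, hM_symm.sub hΔdiag.isSymm, fun i => by simp [hM_diag], ?_, ?_⟩ <;>
    rw [add_sub_cancel]
  · exact hM_lt
  · exact rangesOrth_of_range_le_ker hΩ.isHermitian hM_range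

/-- With `V` an isometry onto `ker Ωh`, `E(X) = diag(V X Vᵀ)` surjective,
`G = E†` its Moore–Penrose pseudoinverse (a right inverse of `E` whose values are
symmetric and orthogonal to `ker E` in the Frobenius inner product) and
`φ(Ωh) = inf ‖Δ‖_F / ‖E†(Δ)‖` over nonzero `Δ ∈ D_+^n`, every `Δ ∈ D_+^n` with
`‖Δ‖_F < φ(Ωh) σ_r(Ωh)` belongs to `D_Ωh`. -/
theorem stmt7 {n r : ℕ} (hrn : r < n)
    (Ωh : Matrix (Fin n) (Fin n) ℝ) (hΩ : Ωh.PosSemidef) (hrank : Ωh.rank = r)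
    (V : Matrix (Fin n) (Fin (n - r)) ℝ)
    (hViso : Vᵀ * V = 1)
    (hVrange : LinearMap.range V.mulVecLin = LinearMap.ker Ωh.mulVecLin)
    -- the operator `E(X) = diag(V X Vᵀ)` is surjective onto diagonal matrices:
    (hsurj : ∀ D : Matrix (Fin n) (Fin n) ℝ, D.IsDiag →
      ∃ X : Matrix (Fin (n - r)) (Fin (n - r)) ℝ, X.IsSymm ∧
        Matrix.diagonal (V * X * Vᵀ).diag = D)
    -- `G` is the Moore–Penrose pseudoinverse `E†` of `E`:
    (G : Matrix (Fin n) (Fin n) ℝ →ₗ[ℝ] Matrix (Fin (n - r)) (Fin (n - r)) ℝ)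
    (hGsymm : ∀ D : Matrix (Fin n) (Fin n) ℝ, D.IsDiag → (G D).IsSymm)
    (hGrinv : ∀ D : Matrix (Fin n) (Fin n) ℝ, D.IsDiag →
      Matrix.diagonal (V * G D * Vᵀ).diag = D)
    (hGorth : ∀ D : Matrix (Fin n) (Fin n) ℝ, D.IsDiag →
      ∀ X : Matrix (Fin (n - r)) (Fin (n - r)) ℝ, X.IsSymm →
        Matrix.diagonal (V * X * Vᵀ).diag = 0 → minner (G D) X = 0)
    (φ : ℝ)
    (hφ : φ = sInf {t : ℝ | ∃ Δ : Matrix (Fin n) (Fin n) ℝ, Δ.IsDiag ∧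
      (∀ i, 0 ≤ Δ i i) ∧ Δ ≠ 0 ∧ t = frobNorm Δ / opNorm (G Δ)}) :
    ∀ Δ : Matrix (Fin n) (Fin n) ℝ, Δ.IsDiag → (∀ i, 0 ≤ Δ i i) →
      frobNorm Δ < φ * sv Ωh r →
      ∃ Λ : Matrix (Fin n) (Fin n) ℝ, Λ.IsSymm ∧ (∀ i, Λ i i = 0) ∧
        opNorm (Δ + Λ) < sv Ωh r ∧ rangesOrth (Δ + Λ) Ωh :=
  stmt7_general Ωh hΩ V hViso hVrange G hGsymm hGrinv φ hφ
end
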